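/- arXiv:0709.3887 — 3 statements merged into one kernel-verified Lean document; each statement's English description precedes it below -/
import Mathlib

section
/- (Commutation, Proposition 1.) For every n ≥ 3, all a, b ∈ ℤ/4ℤ and all i, j with 1 ≤ i ≤ n−1 and 1 ≤ j ≤ n−1, the relation ₐσᵢ · (ᵦσⱼ)⁻¹ = (₍ₐ₊₁₎σᵢ)⁻¹ · ₍ᵦ₊₁₎σⱼ holds in the braid group B_n. -/
namespace Braid

/-- The braid relations on `n` strands: generators `0, …, n-2` stand for `σ₁, …, σ_{n-1}`. -/
def braidRels (n : ℕ) : Set (FreeGroup (Fin (n - 1))) :=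
  { r | (∃ i j : Fin (n - 1), (i : ℕ) + 2 ≤ (j : ℕ) ∧
          r = FreeGroup.of i * FreeGroup.of j * (FreeGroup.of i)⁻¹ * (FreeGroup.of j)⁻¹) ∨
        (∃ i j : Fin (n - 1), (j : ℕ) = (i : ℕ) + 1 ∧
          r = FreeGroup.of i * FreeGroup.of j * FreeGroup.of i *
              (FreeGroup.of j * FreeGroup.of i * FreeGroup.of j)⁻¹) }

/-- The braid group `B_n`, presented by `σ₁, …, σ_{n-1}` and the braid relations. -/
abbrev BraidGroup (n : ℕ) := PresentedGroup (braidRels n)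

/-- The standard generator `σ i` of `B_n` (1-indexed); junk value `1` out of range. -/
def s (n : ℕ) (i : ℕ) : BraidGroup n :=
  if h : 1 ≤ i ∧ i ≤ n - 1 then PresentedGroup.of (⟨i - 1, by omega⟩ : Fin (n - 1)) else 1

/-- The Garside half-twist `Δ = (σ₁)(σ₂σ₁)(σ₃σ₂σ₁)⋯(σ_{n-1}σ_{n-2}⋯σ₁)` in `B_n`. -/
def halfTwist (n : ℕ) : BraidGroup n :=
  ((List.range (n - 1)).map
    (fun r => (((List.range (r + 1)).reverse).map (fun k => s n (k + 1))).prod)).prod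

/-- The submonoid of positive braids of `B_n`: the monoid generated by `σ₁, …, σ_{n-1}`. -/
def positive (n : ℕ) : Submonoid (BraidGroup n) :=
  Submonoid.closure (s n '' Set.Icc 1 (n - 1))

/-- The extended generators `ₐσᵢ` of `B_n`:
`₀σᵢ = σᵢ`, `₁σᵢ = Δ·σᵢ⁻¹`, `₂σᵢ = σ_{n-i}`, `₃σᵢ = Δ·σ_{n-i}⁻¹`. -/
def es (n : ℕ) (a : ZMod 4) (i : ℕ) : BraidGroup n :=
  if a = 0 then s n i
  else if a = 1 then halfTwist n * (s n i)⁻¹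
  else if a = 2 then s n (n - i)
  else halfTwist n * (s n (n - i))⁻¹

/-- An extended letter `ₐσᵢ^{e}` is coded as `(a, i, e)`, where `e = true` means
exponent `+1` (a positive letter) and `e = false` means exponent `-1` (a negative letter). -/
abbrev ELetter : Type := ZMod 4 × ℕ × Bool

/-- The element of `B_n` represented by an extended letter. -/
def eletterProd (n : ℕ) (x : ELetter) : BraidGroup n :=
  if x.2.2 then es n x.1 x.2.1 else (es n x.1 x.2.1)⁻¹

/-- The element of `B_n` represented by an extended word. -/
def eprod (n : ℕ) (W : List ELetter) : BraidGroup n :=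
  (W.map (eletterProd n)).prod

/-- The element of `B_n` represented by a positive extended word,
coded as a list of pairs `(a, i)` standing for the letters `ₐσᵢ` (no inverses). -/
def eposProd (n : ℕ) (P : List (ZMod 4 × ℕ)) : BraidGroup n :=
  (P.map (fun x => es n x.1 x.2)).prod

/-- A standard word is a list of pairs `(i, e)` standing for the letters `σᵢ^{±1}`;
this is the element of `B_n` it represents. -/
def sprod (n : ℕ) (V : List (ℕ × Bool)) : BraidGroup n :=
  (V.map (fun x => if x.2 then s n x.1 else (s n x.1)⁻¹)).prod

/-- The element of `B_n` represented by a positive standard word (a list of indices). -/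
def posProd (n : ℕ) (P : List ℕ) : BraidGroup n :=
  (P.map (s n)).prod

/-- The shift `sh(d, ₐσⱼ^{e}) = ₍ₐ₊d₎σⱼ^{f}`, with `f = e` if `d ∈ {0,2}` and
`f = -e` if `d ∈ {1,3}`. -/
def sh (d : ZMod 4) (x : ELetter) : ELetter :=
  (x.1 + d, x.2.1, if d = 0 ∨ d = 2 then x.2.2 else !x.2.2)

/-- One step of the inductive definition of the separation of an extended word. -/
def sepStep (t : List (ZMod 4) × ZMod 4 × List (ZMod 4)) (x : ELetter) :
    List (ZMod 4) × ZMod 4 × List (ZMod 4) :=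
  if x.2.2 = false then (t.1, t.2.1, t.2.2 ++ [-t.2.1])
  else
    match t.2.2 with
    | [] => (t.1 ++ [0], t.2.1, [])
    | a :: L'' => (t.1 ++ [a + t.2.1 + 1], t.2.1 + 2, L'' ++ [3 - t.2.1])

/-- The separation `(L, δ, L')` of an extended word, defined inductively from the left. -/
def separation (W : List ELetter) : List (ZMod 4) × ZMod 4 × List (ZMod 4) :=
  W.foldl sepStep ([], 0, [])

/-- The bishift `SH2(L, δ, L', W)`: the first `|L|` letters of `W` are shifted by the
entries of `L`, the remaining letters are shifted by `δ +` the entries of `L'`. -/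
def SH2 (L : List (ZMod 4)) (δ : ZMod 4) (L' : List (ZMod 4)) (W : List ELetter) :
    List ELetter :=
  List.zipWith sh L (W.take L.length) ++
    List.zipWith sh (L'.map (fun d => δ + d)) (W.drop L.length)

/-!
The half-twist `Δ_m` on the strands `1, …, m+1` factors both as `Δ_{m-1} · σ_m ⋯ σ₁` and as
`σ₁ ⋯ σ_m · Δ_{m-1}`; pushing `σᵢ` through these factorizations shows by induction that
`Δ_m σᵢ = σ_{m+1-i} Δ_m`. For `m = n-1` this says `Δ σᵢ = σ_{n-i} Δ`, which gives
`₍ₐ₊₁₎σᵢ · ₐσᵢ = Δ` for every `a`; substituting `ₐσᵢ = (₍ₐ₊₁₎σᵢ)⁻¹ Δ` and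
`(ᵦσⱼ)⁻¹ = Δ⁻¹ ₍ᵦ₊₁₎σⱼ` into the left-hand side, the two copies of `Δ` cancel.
-/

section Generators

variable {n : ℕ}

theorem s_of_le {i : ℕ} (hi1 : 1 ≤ i) (hi2 : i ≤ n - 1) :
    s n i = PresentedGroup.of (⟨i - 1, by omega⟩ : Fin (n - 1)) :=
  dif_pos ⟨hi1, hi2⟩

theorem s_of_not_le {i : ℕ} (hi : ¬(1 ≤ i ∧ i ≤ n - 1)) : s n i = 1 :=
  dif_neg hi

theorem mk_eq_one_of_mem_braidRels {r : FreeGroup (Fin (n - 1))} (hr : r ∈ braidRels n) :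
    PresentedGroup.mk (braidRels n) r = 1 :=
  (QuotientGroup.eq_one_iff r).mpr (Subgroup.subset_normalClosure hr)

theorem commute_of_of {i j : Fin (n - 1)} (h : (i : ℕ) + 2 ≤ j) :
    Commute (PresentedGroup.of i : BraidGroup n) (PresentedGroup.of j) := by
  have hrel := mk_eq_one_of_mem_braidRels (Or.inl ⟨i, j, h, rfl⟩)
  simp only [map_mul, map_inv] at hrel
  exact commutatorElement_eq_one_iff_mul_comm.mp hrel

theorem of_mul_of_mul_of {i j : Fin (n - 1)} (h : (j : ℕ) = i + 1) :
    (PresentedGroup.of i : BraidGroup n) * PresentedGroup.of j * PresentedGroup.of i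
      = PresentedGroup.of j * PresentedGroup.of i * PresentedGroup.of j := by
  have hrel := mk_eq_one_of_mem_braidRels (Or.inr ⟨i, j, h, rfl⟩)
  simp only [map_mul, map_inv] at hrel
  exact mul_inv_eq_one.mp hrel

/-- Holds for all `i`, `j`, since out-of-range generators are `1`. -/
theorem commute_s {i j : ℕ} (h : i + 2 ≤ j) : Commute (s n i) (s n j) := by
  by_cases hi : 1 ≤ i
  · by_cases hj : j ≤ n - 1
    · rw [s_of_le hi (by omega), s_of_le (by omega) hj]
      exact commute_of_of (by simp only; omega)
    · rw [s_of_not_le (i := j) (by omega)]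
      exact Commute.one_right _
  · rw [s_of_not_le (i := i) (by omega)]
    exact Commute.one_left _

theorem s_mul_s_mul_s {i : ℕ} (hi1 : 1 ≤ i) (hi2 : i + 1 ≤ n - 1) :
    s n i * s n (i + 1) * s n i = s n (i + 1) * s n i * s n (i + 1) := by
  rw [s_of_le hi1 (by omega), s_of_le (by omega) hi2]
  exact of_mul_of_mul_of (by simp only; omega)

end Generators

section HalfTwist

variable (n : ℕ)

def descProd : ℕ → BraidGroup n
  | 0 => 1
  | r + 1 => s n (r + 1) * descProd r

def ascProd : ℕ → BraidGroup n
  | 0 => 1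
  | r + 1 => ascProd r * s n (r + 1)

/-- The half-twist `Δ_m` of the first `m + 1` strands. -/
def garsideProd : ℕ → BraidGroup n
  | 0 => 1
  | m + 1 => garsideProd m * descProd n (m + 1)

variable {n}

theorem commute_s_descProd {j r : ℕ} (h : r + 2 ≤ j) : Commute (s n j) (descProd n r) := by
  induction r with
  | zero => exact Commute.one_right _
  | succ r ih => exact ((commute_s h).symm).mul_right (ih (by omega))

theorem commute_s_ascProd {j r : ℕ} (h : r + 2 ≤ j) : Commute (s n j) (ascProd n r) := by
  induction r with
  | zero => exact Commute.one_right _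
  | succ r ih => exact (ih (by omega)).mul_right (commute_s h).symm

theorem commute_s_garsideProd {j m : ℕ} (h : m + 2 ≤ j) :
    Commute (s n j) (garsideProd n m) := by
  induction m with
  | zero => exact Commute.one_right _
  | succ m ih => exact (ih (by omega)).mul_right (commute_s_descProd h)

theorem s_mul_descProd {i r : ℕ} (hi : 1 ≤ i) (hir : i < r) (hr : r ≤ n - 1) :
    s n i * descProd n r = descProd n r * s n (i + 1) := by
  induction r with
  | zero => omega
  | succ r ih =>
    rcases Nat.lt_succ_iff_lt_or_eq.mp hir with hlt | rfl
    · calc s n i * descProd n (r + 1) = s n (r + 1) * (s n i * descProd n r) := by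
            rw [descProd, ← mul_assoc, (commute_s (by omega)).eq, mul_assoc]
        _ = descProd n (r + 1) * s n (i + 1) := by
            rw [ih hlt (by omega), descProd, mul_assoc]
    · obtain ⟨k, rfl⟩ : ∃ k, i = k + 1 := ⟨i - 1, by omega⟩
      calc s n (k + 1) * descProd n (k + 2)
          = s n (k + 1) * s n (k + 2) * s n (k + 1) * descProd n k := by
            simp only [descProd, mul_assoc]
        _ = s n (k + 2) * s n (k + 1) * (s n (k + 2) * descProd n k) := by
            rw [s_mul_s_mul_s hi hr, mul_assoc]
        _ = descProd n (k + 2) * s n (k + 2) := by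
            rw [(commute_s_descProd le_rfl).eq]
            simp only [descProd, mul_assoc]

theorem s_succ_mul_ascProd {i r : ℕ} (hi : 1 ≤ i) (hir : i < r) (hr : r ≤ n - 1) :
    s n (i + 1) * ascProd n r = ascProd n r * s n i := by
  induction r with
  | zero => omega
  | succ r ih =>
    rcases Nat.lt_succ_iff_lt_or_eq.mp hir with hlt | rfl
    · calc s n (i + 1) * ascProd n (r + 1) = ascProd n r * (s n i * s n (r + 1)) := by
            rw [ascProd, ← mul_assoc, ih hlt (by omega), mul_assoc]
        _ = ascProd n (r + 1) * s n i := by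
            rw [(commute_s (by omega)).eq, ascProd, mul_assoc]
    · obtain ⟨k, rfl⟩ : ∃ k, i = k + 1 := ⟨i - 1, by omega⟩
      calc s n (k + 2) * ascProd n (k + 2)
          = ascProd n k * (s n (k + 2) * s n (k + 1) * s n (k + 2)) := by
            simp only [ascProd, ← mul_assoc]
            rw [(commute_s_ascProd le_rfl).eq]
        _ = ascProd n (k + 2) * s n (k + 1) := by
            rw [← s_mul_s_mul_s hi hr]
            simp only [ascProd, mul_assoc]

theorem garsideProd_succ_eq_ascProd_mul (m : ℕ) :
    garsideProd n (m + 1) = ascProd n (m + 1) * garsideProd n m := by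
  induction m with
  | zero => simp [garsideProd, descProd, ascProd]
  | succ m ih =>
    calc garsideProd n (m + 2) = garsideProd n (m + 1) * s n (m + 2) * descProd n (m + 1) := by
          rw [garsideProd, descProd, mul_assoc]
      _ = ascProd n (m + 1) * (s n (m + 2) * garsideProd n m) * descProd n (m + 1) := by
          rw [ih, mul_assoc (ascProd n (m + 1)), (commute_s_garsideProd le_rfl).eq]
      _ = ascProd n (m + 2) * garsideProd n (m + 1) := by
          simp only [ascProd, garsideProd, mul_assoc]

theorem garsideProd_mul_s {m i : ℕ} (hm : m ≤ n - 1) (hi1 : 1 ≤ i) (hi2 : i ≤ m) :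
    garsideProd n m * s n i = s n (m + 1 - i) * garsideProd n m := by
  induction m generalizing i with
  | zero => omega
  | succ m ih =>
    rcases Nat.lt_or_ge 1 i with hi | hi
    · obtain ⟨k, rfl⟩ : ∃ k, i = k + 1 := ⟨i - 1, by omega⟩
      rw [garsideProd, mul_assoc, ← s_mul_descProd (by omega) (by omega) hm, ← mul_assoc,
        ih (by omega) (by omega) (by omega), mul_assoc]
      congr 2
      omega
    obtain rfl : i = 1 := by omega
    rcases Nat.eq_zero_or_pos m with rfl | hm0
    · simp [garsideProd, descProd]
    · calc garsideProd n (m + 1) * s n 1 = ascProd n (m + 1) * (garsideProd n m * s n 1) := by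
            rw [garsideProd_succ_eq_ascProd_mul, mul_assoc]
        _ = s n (m + 1) * ascProd n (m + 1) * garsideProd n m := by
            rw [ih (by omega) le_rfl hm0, ← mul_assoc, Nat.add_sub_cancel,
              ← s_succ_mul_ascProd (i := m) hm0 (by omega) hm]
        _ = s n (m + 1 + 1 - 1) * garsideProd n (m + 1) := by
            rw [garsideProd_succ_eq_ascProd_mul, Nat.add_sub_cancel, mul_assoc]

theorem halfTwist_eq_garsideProd : halfTwist n = garsideProd n (n - 1) := by
  have hdesc (r : ℕ) :
      (((List.range r).reverse).map (fun k => s n (k + 1))).prod = descProd n r := by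
    induction r with
    | zero => rfl
    | succ r ih => simp [List.range_succ, descProd, ← ih]
  have hprod (m : ℕ) : ((List.range m).map
      (fun r => (((List.range (r + 1)).reverse).map (fun k => s n (k + 1))).prod)).prod
        = garsideProd n m := by
    induction m with
    | zero => rfl
    | succ m ih => simp [List.range_succ, garsideProd, ← ih, ← hdesc]
  exact hprod (n - 1)

theorem halfTwist_mul_s {i : ℕ} (hi1 : 1 ≤ i) (hi2 : i ≤ n - 1) :
    halfTwist n * s n i = s n (n - i) * halfTwist n := by
  rw [halfTwist_eq_garsideProd, garsideProd_mul_s le_rfl hi1 hi2]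
  congr 2
  omega

end HalfTwist

theorem es_add_one_mul_es {n : ℕ} (a : ZMod 4) {i : ℕ} (hi1 : 1 ≤ i) (hi2 : i ≤ n - 1) :
    es n (a + 1) i * es n a i = halfTwist n := by
  have hconj := halfTwist_mul_s hi1 hi2
  have hconj' : halfTwist n * s n (n - i) = s n i * halfTwist n := by
    rw [halfTwist_mul_s (by omega) (by omega), Nat.sub_sub_self (by omega)]
  obtain rfl | rfl | rfl | rfl : a = 0 ∨ a = 1 ∨ a = 2 ∨ a = 3 := by decide +revert
  all_goals simp +decide only [es, if_true, if_false]
  · group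
  · rw [← mul_assoc, ← hconj]; group
  · group
  · rw [← mul_assoc, ← hconj']; group

theorem commutation_general (n : ℕ) (a b : ZMod 4) (i j : ℕ)
    (hi1 : 1 ≤ i) (hi2 : i ≤ n - 1) (hj1 : 1 ≤ j) (hj2 : j ≤ n - 1) :
    es n a i * (es n b j)⁻¹ = (es n (a + 1) i)⁻¹ * es n (b + 1) j := by
  rw [eq_inv_mul_of_mul_eq (es_add_one_mul_es a hi1 hi2),
    eq_inv_mul_of_mul_eq (es_add_one_mul_es b hj1 hj2)]
  group

/-- Commutation (Proposition 1): for every `n ≥ 3`, `a, b ∈ ℤ/4ℤ`, `1 ≤ i ≤ n-1` and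
`1 ≤ j ≤ n-1`, the relation `ₐσᵢ·(ᵦσⱼ)⁻¹ = (₍ₐ₊₁₎σᵢ)⁻¹·₍ᵦ₊₁₎σⱼ` holds in `B_n`. -/
theorem commutation (n : ℕ) (hn : 3 ≤ n) (a b : ZMod 4) (i j : ℕ)
    (hi1 : 1 ≤ i) (hi2 : i ≤ n - 1) (hj1 : 1 ≤ j) (hj2 : j ≤ n - 1) :
    es n a i * (es n b j)⁻¹ = (es n (a + 1) i)⁻¹ * es n (b + 1) j :=
  commutation_general n a b i j hi1 hi2 hj1 hj2

end Braid
end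

section
/- For every extended word W, the component δ of the separation (L, δ, L') of W always lies in {0, 2} ⊆ ℤ/4ℤ; moreover δ = 0 if and only if W is positive or the number of positive letters occurring after the first negative letter of W is even. -/
namespace Braid

/-! The list `L'` is empty exactly as long as no negative letter has been read, and
from then on every positive letter adds `2` to `δ` while negative letters leave it unchanged.
Hence `δ = 2k` in `ZMod 4`, where `k` counts the positive letters after the first negative one. -/

def positivesAfterFirstNegative (W : List ELetter) : ℕ :=
  ((W.dropWhile (fun x => x.2.2)).tail).countP (fun x => x.2.2)

theorem _root_.List.tail_dropWhile_append_singleton {α : Type*} (p : α → Bool) (l : List α)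
    (x : α) :
    ((l ++ [x]).dropWhile p).tail =
      if ∀ y ∈ l, p y = true then [] else (l.dropWhile p).tail ++ [x] := by
  rw [List.dropWhile_append]
  by_cases hl : ∀ y ∈ l, p y = true
  · rw [if_pos hl, List.dropWhile_eq_nil_iff.mpr hl]
    cases hx : p x <;> simp [List.dropWhile, hx]
  · have hne : l.dropWhile p ≠ [] := fun h => hl (List.dropWhile_eq_nil_iff.mp h)
    rw [if_neg hl, if_neg (by simpa using hne), List.tail_append_of_ne_nil hne]

theorem positivesAfterFirstNegative_append_singleton (W : List ELetter) (x : ELetter) :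
    positivesAfterFirstNegative (W ++ [x]) =
      positivesAfterFirstNegative W + if x.2.2 = true ∧ ¬ ∀ y ∈ W, y.2.2 = true then 1 else 0 := by
  unfold positivesAfterFirstNegative
  rw [List.tail_dropWhile_append_singleton]
  by_cases hW : ∀ y ∈ W, y.2.2 = true
  · rw [if_pos hW, if_neg (fun h => h.2 hW), List.dropWhile_eq_nil_iff.mpr hW]
    rfl
  · rw [if_neg hW, List.countP_append, List.countP_singleton]
    simp only [hW, not_false_eq_true, and_true]

theorem positivesAfterFirstNegative_eq_zero_of_forall {W : List ELetter}
    (hW : ∀ x ∈ W, x.2.2 = true) : positivesAfterFirstNegative W = 0 := by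
  simp [positivesAfterFirstNegative, List.dropWhile_eq_nil_iff.mpr hW]

theorem sepStep_snd_snd_eq_nil_iff (t : List (ZMod 4) × ZMod 4 × List (ZMod 4)) (x : ELetter) :
    (sepStep t x).2.2 = [] ↔ t.2.2 = [] ∧ x.2.2 = true := by
  rcases t with ⟨L, δ, _ | ⟨a, L''⟩⟩ <;> rcases x with ⟨b, i, _ | _⟩ <;> simp [sepStep]

theorem sepStep_snd_fst (t : List (ZMod 4) × ZMod 4 × List (ZMod 4)) (x : ELetter) :
    (sepStep t x).2.1 = t.2.1 + if x.2.2 = true ∧ t.2.2 ≠ [] then 2 else 0 := by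
  rcases t with ⟨L, δ, _ | ⟨a, L''⟩⟩ <;> rcases x with ⟨b, i, _ | _⟩ <;> simp [sepStep]

theorem separation_append_singleton (W : List ELetter) (x : ELetter) :
    separation (W ++ [x]) = sepStep (separation W) x := by
  simp [separation, List.foldl_append]

theorem separation_snd_snd_eq_nil_iff (W : List ELetter) :
    (separation W).2.2 = [] ↔ ∀ x ∈ W, x.2.2 = true := by
  induction W using List.reverseRecOn with
  | nil => simp [separation]
  | append_singleton W x ih =>
    rw [separation_append_singleton, sepStep_snd_snd_eq_nil_iff, ih]
    simp [or_imp, forall_and]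

theorem separation_delta_eq_two_mul (W : List ELetter) :
    (separation W).2.1 = 2 * (positivesAfterFirstNegative W : ZMod 4) := by
  induction W using List.reverseRecOn with
  | nil => simp [separation, positivesAfterFirstNegative]
  | append_singleton W x ih =>
    rw [separation_append_singleton, sepStep_snd_fst, ih,
      positivesAfterFirstNegative_append_singleton]
    simp only [← separation_snd_snd_eq_nil_iff]
    split_ifs <;> push_cast <;> ring

theorem two_mul_natCast_zmod_four (k : ℕ) : 2 * (k : ZMod 4) = if Even k then 0 else 2 := by
  obtain ⟨m, rfl | rfl⟩ := Nat.even_or_odd' k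
  · simp only [Nat.even_mul, even_two, true_or, if_true, Nat.cast_mul, Nat.cast_ofNat]
    rw [← mul_assoc, show (2 * 2 : ZMod 4) = 0 from rfl, zero_mul]
  · simp only [Nat.not_even_bit1, if_false, Nat.cast_add, Nat.cast_mul, Nat.cast_ofNat,
      Nat.cast_one]
    rw [mul_add, ← mul_assoc, show (2 * 2 : ZMod 4) = 0 from rfl, zero_mul, zero_add, mul_one]

/-- The component `δ` of the separation of any extended word `W` lies in `{0, 2}`,
and `δ = 0` if and only if `W` is positive or the number of positive letters
occurring after the first negative letter of `W` is even. -/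
theorem separation_delta (W : List ELetter) :
    ((separation W).2.1 = 0 ∨ (separation W).2.1 = 2) ∧
    ((separation W).2.1 = 0 ↔ ((∀ x ∈ W, x.2.2 = true) ∨
      Even (((W.dropWhile (fun x => x.2.2)).tail).countP (fun x => x.2.2)))) := by
  have hδ := separation_delta_eq_two_mul W
  rw [two_mul_natCast_zmod_four] at hδ
  change _ ∧ (_ ↔ _ ∨ Even (positivesAfterFirstNegative W))
  have hpos : (∀ x ∈ W, x.2.2 = true) → Even (positivesAfterFirstNegative W) := fun h =>
    positivesAfterFirstNegative_eq_zero_of_forall h ▸ Even.zero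
  rw [or_iff_right_of_imp hpos, hδ]
  split_ifs with heven <;> simp [heven, show (2 : ZMod 4) ≠ 0 by decide]

end Braid
end

section
/- (Standard division, mathematical content of Theorems 3 and 4.) For every n ≥ 3 and every word V in the letters σ₁^{±1},…,σ_{n−1}^{±1}, there exist positive standard words P and Q, each of length at most |V|·(n(n−1)/2 − 1), such that the product of V in B_n equals (product of P)·(product of Q)⁻¹. -/
namespace Braid

/-! ### Auxiliary development for standard division -/

section Aux

lemma rel_one {n : ℕ} {r : FreeGroup (Fin (n-1))} (hr : r ∈ braidRels n) :
    PresentedGroup.mk (braidRels n) r = 1 :=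
  (QuotientGroup.eq_one_iff r).mpr (Subgroup.subset_normalClosure hr)

lemma of_eq {n : ℕ} (i : Fin (n-1)) :
    PresentedGroup.mk (braidRels n) (FreeGroup.of i) = PresentedGroup.of i := rfl

lemma s_comm {n i j : ℕ} (h1 : 1 ≤ i) (h2 : i + 2 ≤ j) (h3 : j ≤ n - 1) :
    s n i * s n j = s n j * s n i := by
  have hij : 1 ≤ j := by omega
  rw [s, s, dif_pos ⟨h1, by omega⟩, dif_pos ⟨hij, h3⟩]
  set a : Fin (n-1) := ⟨i-1, by omega⟩
  set b : Fin (n-1) := ⟨j-1, by omega⟩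
  have hr : FreeGroup.of a * FreeGroup.of b * (FreeGroup.of a)⁻¹ * (FreeGroup.of b)⁻¹
      ∈ braidRels n := by
    left; exact ⟨a, b, by simp only [a, b]; omega, rfl⟩
  have h := rel_one hr
  rw [map_mul, map_mul, map_mul, map_inv, map_inv, of_eq, of_eq] at h
  exact mul_inv_eq_iff_eq_mul.mp (mul_inv_eq_one.mp h)

lemma s_braid {n i : ℕ} (h1 : 1 ≤ i) (h2 : i + 1 ≤ n - 1) :
    s n i * s n (i+1) * s n i = s n (i+1) * s n i * s n (i+1) := by
  rw [s, s, dif_pos ⟨h1, by omega⟩, dif_pos ⟨by omega, h2⟩]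
  set a : Fin (n-1) := ⟨i-1, by omega⟩
  set b : Fin (n-1) := ⟨i+1-1, by omega⟩
  have hr : FreeGroup.of a * FreeGroup.of b * FreeGroup.of a *
      (FreeGroup.of b * FreeGroup.of a * FreeGroup.of b)⁻¹ ∈ braidRels n := by
    right; exact ⟨a, b, by simp only [a, b]; omega, rfl⟩
  have h := rel_one hr
  rw [map_mul, map_mul, map_inv, map_mul, map_mul, of_eq, of_eq] at h
  exact mul_inv_eq_one.mp h

/-- The word `σ_{b+k} σ_{b+k-1} ⋯ σ_{b+1}`. -/
def Dw (b k : ℕ) : List ℕ := (List.range k).reverse.map (fun j => b + j + 1)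

/-- The word for the half twist on the strands `b+1, …, b+k+1`:
`D(b,1) D(b,2) ⋯ D(b,k)`. -/
def Δw : ℕ → ℕ → List ℕ
  | _, 0 => []
  | b, (k+1) => Δw b k ++ Dw b (k+1)

lemma Dw_zero (b : ℕ) : Dw b 0 = [] := rfl

lemma Dw_succ (b k : ℕ) : Dw b (k+1) = (b + k + 1) :: Dw b k := by
  simp [Dw, List.range_succ]

lemma Dw_length (b k : ℕ) : (Dw b k).length = k := by simp [Dw]

lemma Dw_mem {b k j : ℕ} (h : j ∈ Dw b k) : b + 1 ≤ j ∧ j ≤ b + k := by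
  simp only [Dw, List.mem_map, List.mem_reverse, List.mem_range] at h
  obtain ⟨a, ha, rfl⟩ := h
  omega

lemma Dw_map (b k : ℕ) : (Dw b k).map (· + 1) = Dw (b+1) k := by
  simp only [Dw, List.map_map]
  congr 1
  funext j
  simp only [Function.comp_apply]
  omega

lemma Δw_mem {b k j : ℕ} (h : j ∈ Δw b k) : b + 1 ≤ j ∧ j ≤ b + k := by
  induction k with
  | zero => simp [Δw] at h
  | succ k ih =>
    rw [Δw, List.mem_append] at h
    rcases h with h | h
    · have := ih h; omega
    · have := Dw_mem h; omega

lemma Δw_map (b k : ℕ) : (Δw b k).map (· + 1) = Δw (b+1) k := by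
  induction k with
  | zero => rfl
  | succ k ih => rw [Δw, Δw, List.map_append, ih, Dw_map]

lemma Δw_length2 (b k : ℕ) : 2 * (Δw b k).length = k * (k+1) := by
  induction k with
  | zero => rfl
  | succ k ih =>
    rw [Δw, List.length_append, Dw_length, Nat.mul_add, ih]
    ring

lemma Δw_length_eq (b b' k : ℕ) : (Δw b k).length = (Δw b' k).length := by
  have h1 := Δw_length2 b k
  have h2 := Δw_length2 b' k
  omega

variable {n : ℕ}

lemma posProd_nil : posProd n [] = 1 := rfl

lemma posProd_cons (i : ℕ) (P : List ℕ) :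
    posProd n (i :: P) = s n i * posProd n P := by simp [posProd]

lemma posProd_append (P Q : List ℕ) :
    posProd n (P ++ Q) = posProd n P * posProd n Q := by simp [posProd]

lemma s_comm' {i j : ℕ} (h1 : 1 ≤ i) (h2 : i + 2 ≤ j) (h3 : j ≤ n - 1)
    (x : BraidGroup n) : s n i * (s n j * x) = s n j * (s n i * x) := by
  rw [← mul_assoc, s_comm h1 h2 h3, mul_assoc]

lemma s_braid' {i : ℕ} (h1 : 1 ≤ i) (h2 : i + 1 ≤ n - 1) (x : BraidGroup n) :
    s n i * (s n (i+1) * (s n i * x)) = s n (i+1) * (s n i * (s n (i+1) * x)) := by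
  rw [← mul_assoc, ← mul_assoc, s_braid h1 h2, mul_assoc, mul_assoc]

/-- A generator commutes with a word all of whose letters are far below it. -/
lemma commW' {W : List ℕ} {i : ℕ} (hW : ∀ j ∈ W, 1 ≤ j ∧ j + 2 ≤ i)
    (hi : i ≤ n - 1) : ∀ x : BraidGroup n,
    s n i * (posProd n W * x) = posProd n W * (s n i * x) := by
  induction W with
  | nil => intro x; simp [posProd_nil]
  | cons a W ih =>
    intro x
    have ha := hW a (by simp)
    simp only [posProd_cons, mul_assoc]
    rw [(s_comm' ha.1 ha.2 hi (posProd n W * x)).symm,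
        ih (fun j hj => hW j (by simp [hj])) x]

/-- Lemma A: `σ_i D(b,k) = D(b,k) σ_{i+1}` for `b+1 ≤ i ≤ b+k-1`. -/
lemma lemA' : ∀ {k b i : ℕ}, b + 1 ≤ i → i + 1 ≤ b + k → b + k ≤ n - 1 →
    ∀ x : BraidGroup n,
    s n i * (posProd n (Dw b k) * x) = posProd n (Dw b k) * (s n (i+1) * x) := by
  intro k
  induction k with
  | zero => intro b i h1 h2; omega
  | succ k ih =>
    intro b i h1 h2 h3 x
    rw [Dw_succ]
    simp only [posProd_cons, mul_assoc]
    by_cases hc : i + 1 ≤ b + k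
    · rw [s_comm' (by omega) (by omega) (by omega) (posProd n (Dw b k) * x),
          ih h1 hc (by omega) x]
    · -- i = b + k, and k ≥ 1
      have hik : i = b + k := by omega
      have hk1 : 1 ≤ k := by omega
      obtain ⟨k', rfl⟩ : ∃ k', k = k' + 1 := ⟨k - 1, by omega⟩
      subst hik
      rw [Dw_succ]
      simp only [posProd_cons, mul_assoc, ← Nat.add_assoc]
      rw [s_braid' (i := b + k' + 1) (by omega) (by omega) (posProd n (Dw b k') * x),
          commW' (W := Dw b k') (i := b + k' + 1 + 1)
            (fun j hj => by have := Dw_mem hj; omega) (by omega) x]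

/-- Word version of Lemma A: a word with letters in `[b+1, b+k-1]` slides through
`D(b,k)`, shifting all its letters up by one. -/
lemma shiftW' {W : List ℕ} {b k : ℕ} (hW : ∀ j ∈ W, b + 1 ≤ j ∧ j + 1 ≤ b + k)
    (hk : b + k ≤ n - 1) : ∀ x : BraidGroup n,
    posProd n W * (posProd n (Dw b k) * x) =
      posProd n (Dw b k) * (posProd n (W.map (· + 1)) * x) := by
  induction W with
  | nil => intro x; simp [posProd_nil]
  | cons a W ih =>
    intro x
    have ha := hW a (by simp)
    simp only [List.map_cons, posProd_cons, mul_assoc]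
    rw [ih (fun j hj => hW j (by simp [hj])) x,
        lemA' ha.1 ha.2 hk (posProd n (W.map (· + 1)) * x)]

/-- Lemma C: `σ_{b+k+1} D(b,k) D(b,k+1) = D(b,k) D(b,k+1) σ_{b+1}`. -/
lemma lemC' : ∀ {k b : ℕ}, 1 ≤ k → b + k + 1 ≤ n - 1 → ∀ x : BraidGroup n,
    s n (b+k+1) * (posProd n (Dw b k) * (posProd n (Dw b (k+1)) * x)) =
      posProd n (Dw b k) * (posProd n (Dw b (k+1)) * (s n (b+1) * x)) := by
  intro k
  induction k with
  | zero => intro b h1 h2; omega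
  | succ k ih =>
    intro b hk1 hk2 x
    by_cases hk0 : k = 0
    · subst hk0
      simp only [Dw_succ, Dw_zero, posProd_cons, posProd_nil, mul_one, mul_assoc,
        Nat.add_zero, ← Nat.add_assoc]
      rw [← s_braid' (i := b + 1) (by omega) (by omega) (s n (b+1) * x)]
    · have hk : 1 ≤ k := by omega
      simp only [← Nat.add_assoc]
      rw [Dw_succ b (k+1), Dw_succ b k]
      simp only [posProd_cons, mul_assoc, ← Nat.add_assoc]
      rw [← commW' (W := Dw b k) (i := b + k + 1 + 1)
            (fun j hj => by have := Dw_mem hj; omega) (by omega)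
            (s n (b+k+1) * (posProd n (Dw b k) * x))]
      rw [← s_braid' (i := b + k + 1) (by omega) (by omega)
            (posProd n (Dw b k) * (s n (b+k+1) * (posProd n (Dw b k) * x)))]
      have htail := ih (b := b) hk (by omega) x
      rw [Dw_succ b k] at htail
      simp only [posProd_cons, mul_assoc, ← Nat.add_assoc] at htail
      rw [htail]
      rw [commW' (W := Dw b k) (i := b + k + 1 + 1)
            (fun j hj => by have := Dw_mem hj; omega) (by omega)
            (s n (b+k+1) * (posProd n (Dw b k) * (s n (b+1) * x)))]

/-- The second factorization of the half twist:
`Δ(b,k+1) = D(b,k+1) · Δ(b+1,k)`. -/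
lemma lemP2 : ∀ {k b : ℕ}, b + k + 1 ≤ n - 1 →
    posProd n (Δw b (k+1)) = posProd n (Dw b (k+1)) * posProd n (Δw (b+1) k) := by
  intro k
  induction k with
  | zero => intro b h; simp [Δw, posProd_nil, posProd_append]
  | succ k ih =>
    intro b h
    rw [show Δw b (k+2) = Δw b (k+1) ++ Dw b (k+2) from rfl, posProd_append,
        ih (by omega)]
    have h1 : posProd n (Δw (b+1) k) * (posProd n (Dw b (k+2)) * 1) =
        posProd n (Dw b (k+2)) * (posProd n ((Δw (b+1) k).map (· + 1)) * 1) :=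
      shiftW' (fun j hj => by have := Δw_mem hj; omega) (by omega) 1
    rw [mul_one, mul_one] at h1
    have h2 : posProd n (Dw b (k+1)) * (posProd n (Dw b (k+2)) * 1) =
        posProd n (Dw b (k+2)) * (posProd n ((Dw b (k+1)).map (· + 1)) * 1) :=
      shiftW' (fun j hj => by have := Dw_mem hj; omega) (by omega) 1
    rw [mul_one, mul_one] at h2
    rw [mul_assoc, h1, Δw_map, ← mul_assoc, h2, Dw_map, mul_assoc,
        ← ih (b := b+1) (by omega)]

/-- Theorem F1: `σ_{b+i} Δ(b,m) = Δ(b,m) σ_{b+m+1-i}`. -/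
lemma F1gen : ∀ {m b i : ℕ}, 1 ≤ i → i ≤ m → b + m ≤ n - 1 → ∀ x : BraidGroup n,
    s n (b+i) * (posProd n (Δw b m) * x) =
      posProd n (Δw b m) * (s n (b+m+1-i) * x) := by
  intro m
  induction m with
  | zero => intro b i h1 h2; omega
  | succ m ih =>
    intro b i h1 h2 h3 x
    by_cases hc : i ≤ m
    · have e : b + (m+1) + 1 - i = (b + m + 1 - i) + 1 := by omega
      rw [e, show Δw b (m+1) = Δw b m ++ Dw b (m+1) from rfl, posProd_append,
          mul_assoc, ih (b := b) h1 hc (by omega) (posProd n (Dw b (m+1)) * x),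
          lemA' (b := b) (k := m+1) (i := b + m + 1 - i) (by omega) (by omega)
            (by omega) x, mul_assoc]
    · have hi : i = m + 1 := by omega
      subst hi
      have e : b + (m+1) + 1 - (m+1) = b + 1 := by omega
      rw [e]
      cases m with
      | zero =>
        show s n (b+1) * (posProd n ([] ++ Dw b 1) * x) =
          posProd n ([] ++ Dw b 1) * (s n (b+1) * x)
        rw [Dw_succ, Dw_zero]
        simp only [List.nil_append, posProd_cons, posProd_nil, mul_one,
          Nat.add_zero, mul_assoc]
      | succ m' =>
        rw [show Δw b (m'+1+1) = (Δw b m' ++ Dw b (m'+1)) ++ Dw b (m'+1+1) from rfl,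
            posProd_append, posProd_append]
        simp only [mul_assoc]
        rw [show b + (m'+1+1) = b + (m'+1) + 1 from by omega]
        rw [commW' (W := Δw b m') (i := b + (m'+1) + 1)
              (fun j hj => by have := Δw_mem hj; omega) (by omega)
              (posProd n (Dw b (m'+1)) * (posProd n (Dw b (m'+1+1)) * x))]
        rw [lemC' (k := m'+1) (b := b) (by omega) (by omega) x]

/-- Theorem F2: `σ_{b+i}` divides `Δ(b,k)` on the left, with positive complement
one letter shorter. -/
lemma F2gen : ∀ {k b i : ℕ}, 1 ≤ i → i ≤ k → b + k ≤ n - 1 →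
    ∃ Y : List ℕ, (∀ j ∈ Y, b + 1 ≤ j ∧ j ≤ b + k) ∧
      Y.length + 1 = (Δw b k).length ∧
      posProd n (Δw b k) = s n (b+i) * posProd n Y := by
  intro k
  induction k with
  | zero => intro b i h1 h2 h3; omega
  | succ k ih =>
    intro b i h1 h2 h3
    by_cases hc : i ≤ k
    · obtain ⟨Y, hY, hYl, hYe⟩ := ih (b := b) h1 hc (by omega)
      refine ⟨Y ++ Dw b (k+1), ?_, ?_, ?_⟩
      · intro j hj
        rcases List.mem_append.mp hj with hj | hj
        · have := hY j hj; omega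
        · have := Dw_mem hj; omega
      · have : (Δw b (k+1)).length = (Δw b k).length + (k+1) := by
          rw [show Δw b (k+1) = Δw b k ++ Dw b (k+1) from rfl,
            List.length_append, Dw_length]
        rw [List.length_append, Dw_length]
        omega
      · rw [show Δw b (k+1) = Δw b k ++ Dw b (k+1) from rfl, posProd_append, hYe,
            posProd_append, mul_assoc]
    · have hi : i = k + 1 := by omega
      subst hi
      refine ⟨Dw b k ++ Δw (b+1) k, ?_, ?_, ?_⟩
      · intro j hj
        rcases List.mem_append.mp hj with hj | hj
        · have := Dw_mem hj; omega
        · have := Δw_mem hj; omega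
      · have h1 := Δw_length_eq (b+1) b k
        have h2 : (Δw b (k+1)).length = (Δw b k).length + (k+1) := by
          rw [show Δw b (k+1) = Δw b k ++ Dw b (k+1) from rfl,
            List.length_append, Dw_length]
        rw [List.length_append, Dw_length]
        omega
      · rw [lemP2 (by omega), Dw_succ, posProd_cons, posProd_append, mul_assoc,
            show b + (k+1) = b + k + 1 from rfl]

lemma halfTwist_eq : halfTwist n = posProd n (Δw 0 (n-1)) := by
  have key : ∀ m : ℕ, posProd n (Δw 0 m) =
      ((List.range m).map
        (fun r => (((List.range (r + 1)).reverse).map (fun k => s n (k + 1))).prod)).prod := by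
    intro m
    induction m with
    | zero => rfl
    | succ m ih =>
      rw [List.range_succ, List.map_append, List.prod_append,
          show Δw 0 (m+1) = Δw 0 m ++ Dw 0 (m+1) from rfl, posProd_append, ih]
      congr 1
      simp only [List.map_cons, List.map_nil, List.prod_cons, List.prod_nil, mul_one]
      simp only [Dw, posProd, List.map_map]
      exact congrArg List.prod (List.map_congr_left (fun a _ => by simp))
  rw [halfTwist, key (n-1)]

lemma F1full (h1 : 1 ≤ i) (h2 : i ≤ n - 1) :
    s n i * halfTwist n = halfTwist n * s n (n - i) := by
  have h := F1gen (n := n) (m := n-1) (b := 0) (i := i) h1 h2 (by omega) 1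
  simp only [Nat.zero_add, mul_one] at h
  have e : n - 1 + 1 - i = n - i := by omega
  rw [e] at h
  rw [halfTwist_eq, h]

lemma F2full (hn3 : 3 ≤ n) {i : ℕ} (h1 : 1 ≤ i) (h2 : i ≤ n - 1) :
    ∃ Y : List ℕ, (∀ j ∈ Y, 1 ≤ j ∧ j ≤ n - 1) ∧
      Y.length + 1 = (Δw 0 (n-1)).length ∧
      halfTwist n = s n i * posProd n Y := by
  obtain ⟨Y, hY, hYl, hYe⟩ := F2gen (n := n) (b := 0) h1 h2 (by omega)
  refine ⟨Y, fun j hj => by have := hY j hj; omega, hYl, ?_⟩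
  rw [halfTwist_eq, hYe, Nat.zero_add]

lemma conjW {W : List ℕ} (hW : ∀ j ∈ W, 1 ≤ j ∧ j ≤ n - 1) :
    posProd n (W.map (n - ·)) * halfTwist n = halfTwist n * posProd n W := by
  induction W with
  | nil => simp [posProd_nil]
  | cons a W ih =>
    have ha := hW a (by simp)
    have ihW := ih (fun j hj => hW j (by simp [hj]))
    simp only [List.map_cons, posProd_cons, mul_assoc]
    rw [ihW, ← mul_assoc, F1full (by omega) (by omega),
        show n - (n - a) = a from by omega, mul_assoc]

lemma sprod_nil : sprod n [] = 1 := rfl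

lemma sprod_cons (x : ℕ × Bool) (V : List (ℕ × Bool)) :
    sprod n (x :: V) = (if x.2 then s n x.1 else (s n x.1)⁻¹) * sprod n V := by
  simp [sprod]

lemma sprod_append (A B : List (ℕ × Bool)) :
    sprod n (A ++ B) = sprod n A * sprod n B := by simp [sprod]

lemma sprod_flip (V : List (ℕ × Bool)) :
    sprod n (V.reverse.map (fun x => (x.1, !x.2))) = (sprod n V)⁻¹ := by
  induction V with
  | nil => simp [sprod]
  | cons x V ih =>
    rw [List.reverse_cons, List.map_append, sprod_append, ih, sprod_cons]
    cases hx : x.2 <;> simp [sprod, hx, mul_inv_rev]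

lemma powDelta (q : ℕ) :
    posProd n ((List.replicate q (Δw 0 (n-1))).flatten) = halfTwist n ^ q := by
  induction q with
  | zero => simp [posProd_nil]
  | succ q ih =>
    rw [List.replicate_succ, List.flatten_cons, posProd_append, ih,
        halfTwist_eq, pow_succ']

/-- Number of negative letters of a standard word. -/
def negc (V : List (ℕ × Bool)) : ℕ := V.countP (fun x => !x.2)

lemma negc_le (V : List (ℕ × Bool)) : negc V ≤ V.length :=
  List.countP_le_length

lemma negc_cons (x : ℕ × Bool) (V : List (ℕ × Bool)) :
    negc (x :: V) = negc V + if x.2 then 0 else 1 := by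
  cases hx : x.2 <;> simp [negc, List.countP_cons, hx]

lemma negc_flip (V : List (ℕ × Bool)) :
    negc (V.reverse.map (fun x => (x.1, !x.2))) + negc V = V.length := by
  induction V with
  | nil => rfl
  | cons x V ih =>
    have h : negc ((x :: V).reverse.map fun y => (y.1, !y.2)) =
        negc (V.reverse.map fun y => (y.1, !y.2)) + (if x.2 then 1 else 0) := by
      rw [List.reverse_cons, List.map_append]
      unfold negc
      rw [List.countP_append]
      cases hx : x.2 <;> simp [hx]
    rw [h, negc_cons, List.length_cons]
    cases hx : x.2 <;> simp only [if_pos, if_neg, Bool.false_eq_true,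
      not_false_iff, ite_true, ite_false] <;> omega

/-- The core reduction: every standard word equals a positive word followed by a
negative power of the half twist. -/
lemma reduce (hn3 : 3 ≤ n) : ∀ V : List (ℕ × Bool),
    (∀ x ∈ V, 1 ≤ x.1 ∧ x.1 ≤ n - 1) →
    ∃ P : List ℕ, (∀ k ∈ P, 1 ≤ k ∧ k ≤ n - 1) ∧
      P.length + 2 * negc V = V.length + negc V * (Δw 0 (n-1)).length ∧
      sprod n V = posProd n P * (halfTwist n ^ negc V)⁻¹ := by
  intro V
  induction V with
  | nil =>
    exact fun _ => ⟨[], by simp, by simp [negc], by simp [sprod_nil, posProd_nil, negc]⟩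
  | cons x V ih =>
    intro hV
    obtain ⟨P, hP, hPl, hPe⟩ := ih (fun y hy => hV y (by simp [hy]))
    have hx := hV x (by simp)
    cases hb : x.2
    · -- negative letter
      obtain ⟨Y, hY, hYl, hYe⟩ := F2full hn3 hx.1 hx.2
      have hs : (s n x.1)⁻¹ = posProd n Y * (halfTwist n)⁻¹ := by
        rw [hYe]; group
      have hPP : posProd n P * halfTwist n =
          halfTwist n * posProd n (P.map (n - ·)) := by
        have hmapmap : (P.map (n - ·)).map (n - ·) = P := by
          rw [List.map_map]
          conv_rhs => rw [← List.map_id P]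
          apply List.map_congr_left
          intro j hj
          have := hP j hj
          simp only [Function.comp_apply, id]
          omega
        have h := conjW (n := n) (W := P.map (n - ·))
          (fun j hj => by
            simp only [List.mem_map] at hj
            obtain ⟨a, ha, rfl⟩ := hj
            have := hP a ha
            omega)
        rw [hmapmap] at h
        exact h
      have key : (halfTwist n)⁻¹ * posProd n P =
          posProd n (P.map (n - ·)) * (halfTwist n)⁻¹ := by
        calc (halfTwist n)⁻¹ * posProd n P
            = (halfTwist n)⁻¹ * (posProd n P * halfTwist n) * (halfTwist n)⁻¹ := by
              group
          _ = (halfTwist n)⁻¹ * (halfTwist n * posProd n (P.map (n - ·))) *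
                (halfTwist n)⁻¹ := by rw [hPP]
          _ = posProd n (P.map (n - ·)) * (halfTwist n)⁻¹ := by group
      refine ⟨Y ++ P.map (fun j => n - j), ?_, ?_, ?_⟩
      · intro j hj
        rcases List.mem_append.mp hj with hj | hj
        · exact hY j hj
        · simp only [List.mem_map] at hj
          obtain ⟨a, ha, rfl⟩ := hj
          have := hP a ha
          omega
      · rw [negc_cons, hb, if_neg (by simp)]
        have hmul : (negc V + 1) * (Δw 0 (n-1)).length =
            negc V * (Δw 0 (n-1)).length + (Δw 0 (n-1)).length := by ring
        rw [List.length_append, List.length_map, List.length_cons]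
        omega
      · rw [sprod_cons, hb, if_neg (by simp), hPe, negc_cons, hb,
            if_neg (by simp), posProd_append]
        have : (fun j => n - j) = (n - ·) := rfl
        rw [this, pow_succ, mul_inv_rev]
        calc (s n x.1)⁻¹ * (posProd n P * (halfTwist n ^ negc V)⁻¹)
            = posProd n Y * ((halfTwist n)⁻¹ * posProd n P) *
                (halfTwist n ^ negc V)⁻¹ := by rw [hs]; group
          _ = posProd n Y * (posProd n (P.map (n - ·)) * (halfTwist n)⁻¹) *
                (halfTwist n ^ negc V)⁻¹ := by rw [key]
          _ = posProd n Y * posProd n (P.map (n - ·)) *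
                ((halfTwist n)⁻¹ * (halfTwist n ^ negc V)⁻¹) := by group
    · -- positive letter
      refine ⟨x.1 :: P, ?_, ?_, ?_⟩
      · intro j hj
        rcases List.mem_cons.mp hj with rfl | hj
        · exact hx
        · exact hP j hj
      · rw [negc_cons, hb, if_pos rfl, Nat.add_zero, List.length_cons,
            List.length_cons]
        omega
      · rw [sprod_cons, hb, if_pos rfl, hPe, negc_cons, hb, if_pos rfl,
            posProd_cons, mul_assoc, Nat.add_zero]

end Aux

/-- Standard division (content of Theorems 3 and 4): every standard word `V` of `B_n`
is equivalent to `P·Q⁻¹` with `P, Q` positive standard words of length at most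
`|V|·(n(n-1)/2 - 1)`. -/
theorem standard_division (n : ℕ) (hn : 3 ≤ n) (V : List (ℕ × Bool))
    (hV : ∀ x ∈ V, 1 ≤ x.1 ∧ x.1 ≤ n - 1) :
    ∃ P Q : List ℕ,
      (∀ k ∈ P, 1 ≤ k ∧ k ≤ n - 1) ∧
      (∀ k ∈ Q, 1 ≤ k ∧ k ≤ n - 1) ∧
      P.length ≤ V.length * (n * (n - 1) / 2 - 1) ∧
      Q.length ≤ V.length * (n * (n - 1) / 2 - 1) ∧
      sprod n V = posProd n P * (posProd n Q)⁻¹ := by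
  obtain ⟨P, hP, hPl, hPe⟩ := reduce hn V hV
  have hLM : (Δw 0 (n-1)).length = n * (n-1) / 2 := by
    have h2 := Δw_length2 0 (n-1)
    rw [show n - 1 + 1 = n from by omega] at h2
    rw [Nat.mul_comm n (n-1)]
    omega
  have hL3 : 3 ≤ (Δw 0 (n-1)).length := by
    have h2 := Δw_length2 0 (n-1)
    rw [show n - 1 + 1 = n from by omega] at h2
    have h6 : 2 * 3 ≤ (n-1) * n := Nat.mul_le_mul (by omega) hn
    omega
  have hq := negc_le V
  set L := (Δw 0 (n-1)).length with hLdef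
  rw [← hLM]
  by_cases hcase : negc V * L ≤ V.length * (L - 1)
  · refine ⟨P, (List.replicate (negc V) (Δw 0 (n-1))).flatten, hP, ?_, ?_, ?_, ?_⟩
    · intro k hk
      rw [List.mem_flatten] at hk
      obtain ⟨l, hl, hkl⟩ := hk
      rw [List.eq_of_mem_replicate hl] at hkl
      have := Δw_mem hkl
      omega
    · have e1 : negc V * (L - 2) + 2 * negc V = negc V * L := by
        calc negc V * (L-2) + 2 * negc V = negc V * ((L-2) + 2) := by ring
          _ = negc V * L := by rw [Nat.sub_add_cancel (by omega)]
      have e2 : V.length * (L - 2) + 2 * V.length = V.length * L := by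
        calc V.length * (L-2) + 2 * V.length = V.length * ((L-2) + 2) := by ring
          _ = V.length * L := by rw [Nat.sub_add_cancel (by omega)]
      have e3 : V.length * (L - 1) + V.length = V.length * L := by
        calc V.length * (L-1) + V.length = V.length * ((L-1) + 1) := by ring
          _ = V.length * L := by rw [Nat.sub_add_cancel (by omega)]
      have e4 : negc V * (L - 2) ≤ V.length * (L - 2) :=
        Nat.mul_le_mul_right _ hq
      omega
    · have hlen : ((List.replicate (negc V) (Δw 0 (n-1))).flatten).length =
          negc V * L := by
        rw [List.length_flatten, List.map_replicate, List.sum_replicate,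
          smul_eq_mul, hLdef]
      omega
    · rw [hPe, powDelta]
  · set V' := V.reverse.map (fun x => (x.1, !x.2)) with hV'def
    have hV'v : ∀ y ∈ V', 1 ≤ y.1 ∧ y.1 ≤ n - 1 := by
      intro y hy
      rw [hV'def, List.mem_map] at hy
      obtain ⟨z, hz, rfl⟩ := hy
      exact hV z (List.mem_reverse.mp hz)
    obtain ⟨P₀, hP₀, hP₀l, hP₀e⟩ := reduce hn V' hV'v
    rw [← hLdef] at hP₀l
    have hflip : negc V' + negc V = V.length := negc_flip V
    have hV'len : V'.length = V.length := by rw [hV'def]; simp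
    rw [hV'len] at hP₀l
    push_neg at hcase
    have e1 : negc V' * L + negc V * L = V.length * L := by
      rw [← Nat.add_mul, hflip]
    have e3 : V.length * (L - 1) + V.length = V.length * L := by
      calc V.length * (L-1) + V.length = V.length * ((L-1) + 1) := by ring
        _ = V.length * L := by rw [Nat.sub_add_cancel (by omega)]
    have e5 : V.length ≤ V.length * (L-1) := by
      have := Nat.mul_le_mul_left V.length (show 1 ≤ L - 1 by omega)
      rwa [Nat.mul_one] at this
    refine ⟨(List.replicate (negc V') (Δw 0 (n-1))).flatten, P₀, ?_, hP₀,
      ?_, ?_, ?_⟩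
    · intro k hk
      rw [List.mem_flatten] at hk
      obtain ⟨l, hl, hkl⟩ := hk
      rw [List.eq_of_mem_replicate hl] at hkl
      have := Δw_mem hkl
      omega
    · have hlen : ((List.replicate (negc V') (Δw 0 (n-1))).flatten).length =
          negc V' * L := by
        rw [List.length_flatten, List.map_replicate, List.sum_replicate,
          smul_eq_mul, hLdef]
      omega
    · have f1 : negc V' * (L - 2) + 2 * negc V' = negc V' * L := by
        calc negc V' * (L-2) + 2 * negc V' = negc V' * ((L-2) + 2) := by ring
          _ = negc V' * L := by rw [Nat.sub_add_cancel (by omega)]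
      have f2 : V.length * (L - 2) + 2 * V.length = V.length * L := by
        calc V.length * (L-2) + 2 * V.length = V.length * ((L-2) + 2) := by ring
          _ = V.length * L := by rw [Nat.sub_add_cancel (by omega)]
      have f4 : negc V' * (L - 2) ≤ V.length * (L - 2) :=
        Nat.mul_le_mul_right _ (by omega)
      omega
    · have h := sprod_flip (n := n) V
      rw [← hV'def, hP₀e] at h
      have hsV : sprod n V = halfTwist n ^ negc V' * (posProd n P₀)⁻¹ := by
        calc sprod n V = ((sprod n V)⁻¹)⁻¹ := by group
          _ = (posProd n P₀ * (halfTwist n ^ negc V')⁻¹)⁻¹ := by rw [← h]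
          _ = halfTwist n ^ negc V' * (posProd n P₀)⁻¹ := by group
      rw [hsV, powDelta]

end Braid
end
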